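/- For all nonnegative integers n and \ell, and positive integer m, the Dowling numbers satisfy D_m(n+\ell) = \sum_{j=0}^{\ell} \sum_{k=0}^{n} W_m(\ell, j) \binom{n}{k} (mj)^{n-k} D_m(k). -/
import Mathlib

/-- The Whitney numbers of the second kind of Dowling lattices, with recurrence
factor `m*k + 1`. -/
def whitney (m : ℕ) : ℕ → ℕ → ℕ
  | 0, 0 => 1
  | 0, _ + 1 => 0
  | n + 1, 0 => whitney m n 0
  | n + 1, k + 1 => whitney m n k + (m * (k + 1) + 1) * whitney m n (k + 1)

/-- The Dowling numbers: the sum over k ≤ n of `W_m(n,k)`. -/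
def dowling (m : ℕ) (n : ℕ) : ℕ := ∑ k ∈ Finset.range (n + 1), whitney m n k

open Finset

lemma whitney_eq_zero (m : ℕ) : ∀ {n k : ℕ}, n < k → whitney m n k = 0
  | 0, _+1, _ => rfl
  | n+1, k+1, h => by
      have h1 : n < k := by omega
      have h2 : n < k + 1 := by omega
      simp [whitney, whitney_eq_zero m h1, whitney_eq_zero m h2]

lemma whitney_succ (m N i : ℕ) :
    whitney m (N+1) i
      = (if i = 0 then 0 else whitney m N (i-1)) + (m*i+1) * whitney m N i := by
  cases i <;> simp [whitney]

lemma inner_step (m n j i : ℕ) :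
    ∑ k ∈ range (n+2), (n+1).choose k * (m*j)^(n+1-k) *
        (if j ≤ i then whitney m k (i - j) else 0)
  = ∑ k ∈ range (n+1), n.choose k * (m*j)^(n-k) *
        (if j < i then whitney m k (i - 1 - j) else 0)
  + (m*i+1) * ∑ k ∈ range (n+1), n.choose k * (m*j)^(n-k) *
        (if j ≤ i then whitney m k (i - j) else 0) := by
  by_cases hji : j ≤ i
  case neg =>
    have hji' : ¬ j < i := by omega
    simp [hji, hji']
  simp only [if_pos hji]
  set a := m * j with ha
  set t := i - j with ht
  have hG : ∀ k : ℕ, (if t = 0 then 0 else whitney m k (t-1))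
      = (if j < i then whitney m k (i - 1 - j) else 0) := by
    intro k
    split_ifs with h1 h2 h2
    · omega
    · rfl
    · congr 1; omega
    · omega
  have e1 : ∑ k ∈ range (n+1), n.choose (k+1) * a^(n-k) * whitney m (k+1) t
        + a^(n+1) * whitney m 0 t
      = ∑ k ∈ range (n+1), n.choose k * (a * a^(n-k)) * whitney m k t := by
    have h1 := Finset.sum_range_succ'
      (fun k => n.choose k * a^(n+1-k) * whitney m k t) (n+1)
    have h2 := Finset.sum_range_succ
      (fun k => n.choose k * a^(n+1-k) * whitney m k t) (n+1)
    simp only [Nat.succ_sub_succ, Nat.choose_zero_right, Nat.sub_zero, one_mul,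
      Nat.choose_succ_self, zero_mul] at h1 h2
    rw [← h1, h2, add_zero]
    refine Finset.sum_congr rfl fun k hk => ?_
    have hk' : k ≤ n := by simpa using Nat.lt_succ_iff.mp (Finset.mem_range.mp hk)
    have : n + 1 - k = (n - k) + 1 := by omega
    rw [this, pow_succ]
    ring
  calc ∑ k ∈ range (n+2), (n+1).choose k * a^(n+1-k) * whitney m k t
      = ∑ k ∈ range (n+1), (n+1).choose (k+1) * a^(n-k) * whitney m (k+1) t
        + a^(n+1) * whitney m 0 t := by
        rw [Finset.sum_range_succ']
        simp [Nat.succ_sub_succ]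
    _ = (∑ k ∈ range (n+1), n.choose k * a^(n-k) * whitney m (k+1) t)
        + ((∑ k ∈ range (n+1), n.choose (k+1) * a^(n-k) * whitney m (k+1) t)
          + a^(n+1) * whitney m 0 t) := by
        rw [← add_assoc]
        congr 1
        rw [← Finset.sum_add_distrib]
        refine Finset.sum_congr rfl fun k hk => ?_
        rw [Nat.choose_succ_succ]
        ring
    _ = (∑ k ∈ range (n+1), n.choose k * a^(n-k) * whitney m (k+1) t)
        + ∑ k ∈ range (n+1), n.choose k * (a * a^(n-k)) * whitney m k t := by
        rw [e1]
    _ = (∑ k ∈ range (n+1), (n.choose k * a^(n-k) * (if j < i then whitney m k (i-1-j) else 0)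
            + n.choose k * a^(n-k) * ((m*t+1) * whitney m k t)))
        + ∑ k ∈ range (n+1), n.choose k * (a * a^(n-k)) * whitney m k t := by
        congr 1
        refine Finset.sum_congr rfl fun k hk => ?_
        rw [whitney_succ, hG k]
        ring
    _ = ∑ k ∈ range (n+1), n.choose k * a^(n-k) * (if j < i then whitney m k (i-1-j) else 0)
        + ((∑ k ∈ range (n+1), n.choose k * a^(n-k) * ((m*t+1) * whitney m k t))
          + ∑ k ∈ range (n+1), n.choose k * (a * a^(n-k)) * whitney m k t) := by
        rw [Finset.sum_add_distrib]
        ring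
    _ = ∑ k ∈ range (n+1), n.choose k * a^(n-k) * (if j < i then whitney m k (i-1-j) else 0)
        + (m*i+1) * ∑ k ∈ range (n+1), n.choose k * a^(n-k) * whitney m k t := by
        congr 1
        rw [← Finset.sum_add_distrib, Finset.mul_sum]
        refine Finset.sum_congr rfl fun k hk => ?_
        have hmix : m*t + 1 + a = m*i + 1 := by
          rw [ha]
          have h1 : t + j = i := by omega
          have : m*t + m*j = m*i := by rw [← Nat.mul_add, h1]
          omega
        calc n.choose k * a^(n-k) * ((m*t+1) * whitney m k t)
              + n.choose k * (a * a^(n-k)) * whitney m k t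
            = (m*t+1+a) * (n.choose k * a^(n-k) * whitney m k t) := by ring
          _ = (m*i+1) * (n.choose k * a^(n-k) * whitney m k t) := by rw [hmix]

lemma whitney_zero_row (m t : ℕ) : whitney m 0 t = if t = 0 then 1 else 0 := by
  cases t <;> rfl

lemma whitney_add (m ℓ : ℕ) : ∀ (n i : ℕ), whitney m (n + ℓ) i
    = ∑ j ∈ range (ℓ+1), whitney m ℓ j *
        ∑ k ∈ range (n+1), n.choose k * (m*j)^(n-k) *
          (if j ≤ i then whitney m k (i - j) else 0)
  | 0, i => by
      simp only [Nat.zero_add, Finset.sum_range_one, Nat.choose_self, Nat.sub_self,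
        pow_zero, one_mul, whitney_zero_row]
      have : ∀ j ∈ range (ℓ+1),
          whitney m ℓ j * (if j ≤ i then (if i - j = 0 then 1 else 0) else 0)
          = if j = i then whitney m ℓ j else 0 := by
        intro j hj
        split_ifs with h1 h2 h3 h3 <;> first | (exfalso; omega) | ring
      rw [Finset.sum_congr rfl this, Finset.sum_ite_eq' (range (ℓ+1)) i]
      split_ifs with h
      · rfl
      · exact whitney_eq_zero m
          (show ℓ < i by simp [Finset.mem_range] at h; omega)
  | n+1, i => by
      have hrw : n + 1 + ℓ = (n + ℓ) + 1 := by omega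
      rw [hrw, whitney_succ]
      have step : ∀ j ∈ range (ℓ+1),
          whitney m ℓ j * ∑ k ∈ range (n+2), (n+1).choose k * (m*j)^(n+1-k) *
            (if j ≤ i then whitney m k (i - j) else 0)
          = whitney m ℓ j * (∑ k ∈ range (n+1), n.choose k * (m*j)^(n-k) *
              (if j < i then whitney m k (i - 1 - j) else 0))
            + (m*i+1) * (whitney m ℓ j * ∑ k ∈ range (n+1), n.choose k * (m*j)^(n-k) *
              (if j ≤ i then whitney m k (i - j) else 0)) := by
        intro j hj
        rw [inner_step]
        ring
      rw [Finset.sum_congr rfl step, Finset.sum_add_distrib, ← Finset.mul_sum]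
      congr 1
      · split_ifs with hi
        · refine (Finset.sum_eq_zero fun j hj => ?_).symm
          have : ∀ k ∈ range (n+1), n.choose k * (m*j)^(n-k) *
              (if j < i then whitney m k (i - 1 - j) else 0) = 0 := by
            intro k hk
            rw [if_neg (by omega)]
            ring
          rw [Finset.sum_congr rfl this]
          simp
        · rw [whitney_add m ℓ n (i-1)]
          refine Finset.sum_congr rfl fun j hj => ?_
          congr 1
          refine Finset.sum_congr rfl fun k hk => ?_
          congr 1
          exact if_congr (by omega) rfl rfl
      · rw [whitney_add m ℓ n i]

lemma tail_sum (m k j N : ℕ) (h : k + j ≤ N) :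
    ∑ i ∈ range (N+1), (if j ≤ i then whitney m k (i - j) else 0) = dowling m k := by
  rw [Finset.range_eq_Ico,
    ← Finset.sum_Ico_consecutive _ (Nat.zero_le j) (by omega : j ≤ N+1)]
  have h1 : ∑ i ∈ Finset.Ico 0 j, (if j ≤ i then whitney m k (i - j) else 0) = 0 :=
    Finset.sum_eq_zero fun i hi => if_neg (by have := (Finset.mem_Ico.mp hi).2; omega)
  have h2 : ∑ i ∈ Finset.Ico j (N+1), (if j ≤ i then whitney m k (i - j) else 0)
      = ∑ i ∈ Finset.Ico j (N+1), whitney m k (i - j) :=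
    Finset.sum_congr rfl fun i hi => if_pos (Finset.mem_Ico.mp hi).1
  rw [h1, zero_add, h2, Finset.sum_Ico_eq_sum_range]
  simp only [Nat.add_sub_cancel_left]
  rw [dowling]
  exact (Finset.sum_subset (Finset.range_subset_range.mpr (by omega))
    (fun x _ hx => whitney_eq_zero m (by simp [Finset.mem_range] at hx; omega))).symm

theorem dowling_spivey (n ℓ m : ℕ) (hm : 0 < m) :
    dowling m (n + ℓ) =
      ∑ j ∈ Finset.range (ℓ + 1), ∑ k ∈ Finset.range (n + 1),
        whitney m ℓ j * n.choose k * (m * j) ^ (n - k) * dowling m k := by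
  calc dowling m (n + ℓ)
      = ∑ i ∈ range (n + ℓ + 1), whitney m (n + ℓ) i := rfl
    _ = ∑ i ∈ range (n + ℓ + 1), ∑ j ∈ range (ℓ+1), whitney m ℓ j *
          ∑ k ∈ range (n+1), n.choose k * (m*j)^(n-k) *
            (if j ≤ i then whitney m k (i - j) else 0) :=
        Finset.sum_congr rfl fun i _ => whitney_add m ℓ n i
    _ = ∑ j ∈ range (ℓ+1), ∑ i ∈ range (n + ℓ + 1), whitney m ℓ j *
          ∑ k ∈ range (n+1), n.choose k * (m*j)^(n-k) *
            (if j ≤ i then whitney m k (i - j) else 0) := Finset.sum_comm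
    _ = ∑ j ∈ Finset.range (ℓ + 1), ∑ k ∈ Finset.range (n + 1),
          whitney m ℓ j * n.choose k * (m * j) ^ (n - k) * dowling m k := by
        refine Finset.sum_congr rfl fun j hj => ?_
        rw [← Finset.mul_sum, Finset.sum_comm, Finset.mul_sum]
        refine Finset.sum_congr rfl fun k hk => ?_
        have hjk : k + j ≤ n + ℓ := by
          have := Finset.mem_range.mp hj
          have := Finset.mem_range.mp hk
          omega
        calc whitney m ℓ j * ∑ i ∈ range (n + ℓ + 1), (n.choose k * (m*j)^(n-k) *
              (if j ≤ i then whitney m k (i - j) else 0))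
            = whitney m ℓ j * (n.choose k * (m*j)^(n-k) *
                ∑ i ∈ range (n + ℓ + 1), (if j ≤ i then whitney m k (i - j) else 0)) := by
              rw [← Finset.mul_sum]
          _ = whitney m ℓ j * (n.choose k * (m*j)^(n-k) * dowling m k) := by
              rw [tail_sum m k j (n+ℓ) hjk]
          _ = whitney m ℓ j * n.choose k * (m * j) ^ (n - k) * dowling m k := by ring
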